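/- Let R be a commutative discrete valuation ring with uniformizer π and residue field k = R/(π), and let G be a group. Let L be the abelian group generated by the isomorphism classes of pairs (M, ρ), where M is a finitely generated R-module with π·T(M) = 0 and ρ : G → Aut_R(M) satisfies ρ(1) = id and ρ(gh) ~ ρ(g)ρ(h) for all g, h ∈ G (a lax representation, with isomorphisms and exact sequences taken to be strictly G-equivariant R-linear maps), subject to the relations [B] = [A] + [C] for every strictly G-equivariant short exact sequence 0 → A → B → C → 0. Then for every finite-dimensional k-vector space X, regarded as an R-module, and every group homomorphism ρ : G → Aut_k(X), the class [(X, ρ)] is zero in L. -/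

import Mathlib

/-!
Write `X ≅ R^m / π R^m`. Every automorphism of `X` lifts to an endomorphism of `R^m`, which is an
automorphism by Nakayama's lemma; since `ρ` is a genuine homomorphism, the lifts form a lax
representation on the free module `F = R^m`. Multiplication by `π` then gives a strictly equivariant
short exact sequence `0 → F → F → X → 0`, so `[F] = [F] + [X]` in `L`.
-/

/-- The equivalence relation `a ~ b` iff `(a-b)(M) ⊆ πN` and `a - b` vanishes on the
torsion submodule `T(M)`. -/
def LaxRel {R : Type} [CommRing R] (π : R) {M N : Type}
    [AddCommGroup M] [AddCommGroup N] [Module R M] [Module R N]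
    (a b : M →ₗ[R] N) : Prop :=
  (∀ x : M, ∃ y : N, a x - b x = π • y) ∧
  (∀ x ∈ Submodule.torsion R M, a x = b x)

/-- An object of the category of lax representations of a group `G` in the category `𝒜`
of finitely generated `R`-modules with `π`-annihilated torsion: a (presented) finitely
generated `R`-module `M` with `π·T(M) = 0` together with `ρ : G → Aut_R(M)` such that
`ρ(1) = id` and `ρ(gh) ~ ρ(g)ρ(h)` for all `g, h ∈ G`. -/
structure LObj (R : Type) [CommRing R] (π : R) (G : Type) [Group G] where
  n : ℕ
  rels : Submodule R (Fin n → R)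
  tors : ∀ x ∈ Submodule.torsion R ((Fin n → R) ⧸ rels), π • x = 0
  ρ : G → ((Fin n → R) ⧸ rels) ≃ₗ[R] ((Fin n → R) ⧸ rels)
  map_one : ρ 1 = LinearEquiv.refl R ((Fin n → R) ⧸ rels)
  lax : ∀ g h : G,
    LaxRel π
      ((ρ (g * h)).toLinearMap : ((Fin n → R) ⧸ rels) →ₗ[R] ((Fin n → R) ⧸ rels))
      ((ρ g).toLinearMap ∘ₗ (ρ h).toLinearMap)

/-- The underlying module of an object. -/
abbrev LObj.Mdl {R : Type} [CommRing R] {π : R} {G : Type} [Group G]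
    (o : LObj R π G) : Type := (Fin o.n → R) ⧸ o.rels

/-- Relations defining the group `L`: `[B] = [A] + [C]` for every strictly
`G`-equivariant short exact sequence `0 → A → B → C → 0`. -/
def LRel (R : Type) [CommRing R] (π : R) (G : Type) [Group G] :
    Set (FreeAbelianGroup (LObj R π G)) :=
  {x | ∃ (a b c : LObj R π G) (f : a.Mdl →ₗ[R] b.Mdl) (g : b.Mdl →ₗ[R] c.Mdl),
    Function.Injective f ∧ Function.Surjective g ∧
    LinearMap.range f = LinearMap.ker g ∧
    (∀ g₀ : G, f ∘ₗ (a.ρ g₀ : a.Mdl →ₗ[R] a.Mdl) = (b.ρ g₀ : b.Mdl →ₗ[R] b.Mdl) ∘ₗ f) ∧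
    (∀ g₀ : G, g ∘ₗ (b.ρ g₀ : b.Mdl →ₗ[R] b.Mdl) = (c.ρ g₀ : c.Mdl →ₗ[R] c.Mdl) ∘ₗ g) ∧
    x = FreeAbelianGroup.of b - FreeAbelianGroup.of a - FreeAbelianGroup.of c}

/-- The abelian group `L` generated by the (isomorphism classes of) lax representations
of `G` in `𝒜`, modulo the relations coming from strictly `G`-equivariant short exact
sequences. -/
abbrev LGroup (R : Type) [CommRing R] (π : R) (G : Type) [Group G] : Type :=
  FreeAbelianGroup (LObj R π G) ⧸ AddSubgroup.closure (LRel R π G)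


open IsLocalRing Pointwise

section LocalRing

variable {R : Type*} [CommRing R]

theorem Submodule.mem_ideal_smul_top_of_forall_mem {ι : Type*} [Fintype ι] (I : Ideal R)
    {x : ι → R} (hx : ∀ i, x i ∈ I) : x ∈ I • (⊤ : Submodule R (ι → R)) := by
  classical
  rw [pi_eq_sum_univ x]
  exact Submodule.sum_mem _ fun i _ => Submodule.smul_mem_smul (hx i) Submodule.mem_top

variable [IsLocalRing R] {M : Type*} [AddCommGroup M] [Module R M]

theorem exists_surjective_ker_eq_maximalIdeal_smul_top [Module.Finite R M]
    (hM : Module.IsTorsionBySet R M (maximalIdeal R)) :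
    ∃ (m : ℕ) (φ : (Fin m → R) →ₗ[R] M),
      Function.Surjective φ ∧ LinearMap.ker φ = maximalIdeal R • ⊤ := by
  let : Field (R ⧸ maximalIdeal R) := Ideal.Quotient.field _
  let : Module (R ⧸ maximalIdeal R) M := hM.module
  have : IsScalarTower R (R ⧸ maximalIdeal R) M := hM.isScalarTower
  have : Module.Finite (R ⧸ maximalIdeal R) M := .of_restrictScalars_finite R _ M
  let b := Module.finBasis (R ⧸ maximalIdeal R) M
  let φ : (Fin _ → R) →ₗ[R] M := Fintype.linearCombination R (fun i => b i)
  have hφ : ∀ x, φ x = ∑ i, Ideal.Quotient.mk (maximalIdeal R) (x i) • b i := fun x => by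
    simp only [φ, Fintype.linearCombination_apply]
    exact Finset.sum_congr rfl fun i _ => (algebraMap_smul _ (x i) (b i)).symm
  refine ⟨_, φ, fun y => ?_, le_antisymm (fun x hx => ?_) ?_⟩
  · choose r hr using fun i => Ideal.Quotient.mk_surjective (b.equivFun y i)
    exact ⟨r, by simp only [hφ, hr, b.sum_equivFun]⟩
  · rw [LinearMap.mem_ker, hφ] at hx
    refine Submodule.mem_ideal_smul_top_of_forall_mem _ fun i => ?_
    exact Ideal.Quotient.eq_zero_iff_mem.mp
      (Fintype.linearIndependent_iff.mp b.linearIndependent _ hx i)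
  · refine Submodule.smul_le.mpr fun r hr x _ => ?_
    rw [LinearMap.mem_ker, map_smul]
    exact hM (x := φ x) (a := ⟨r, hr⟩)

theorem exists_linearEquiv_comp_eq_comp {F : Type*} [AddCommGroup F] [Module R F]
    [Module.Finite R F] [Module.Projective R F] (φ : F →ₗ[R] M) (hφ : Function.Surjective φ)
    (hker : LinearMap.ker φ ≤ maximalIdeal R • ⊤) (u : M ≃ₗ[R] M) :
    ∃ τ : F ≃ₗ[R] F, φ ∘ₗ τ = u ∘ₗ φ := by
  obtain ⟨a, ha⟩ := Module.projective_lifting_property φ (u.toLinearMap ∘ₗ φ) hφ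
  have hsup : maximalIdeal R • ⊤ ⊔ LinearMap.range a = ⊤ := by
    refine eq_top_iff.mpr fun x _ => ?_
    obtain ⟨y, hy⟩ := hφ (u.symm (φ x))
    have hxy : x - a y ∈ LinearMap.ker φ := by
      rw [LinearMap.mem_ker, map_sub, ← LinearMap.comp_apply φ a, ha]
      simp [hy]
    exact Submodule.mem_sup.mpr ⟨_, hker hxy, a y, LinearMap.mem_range_self a y, sub_add_cancel x _⟩
  have ha_surj : Function.Surjective a := LinearMap.range_eq_top.mp
    (IsLocalRing.map_mkQ_eq_top.mp ((Submodule.map_mkQ_eq_top _ _).mpr hsup))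
  exact ⟨.ofBijective a (OrzechProperty.bijective_of_surjective_endomorphism a ha_surj), ha⟩

end LocalRing

instance Submodule.isTorsionFree_quotient_bot {R M : Type*} [CommRing R] [AddCommGroup M]
    [Module R M] [Module.IsTorsionFree R M] : Module.IsTorsionFree R (M ⧸ (⊥ : Submodule R M)) :=
  (Submodule.quotEquivOfEqBot ⊥ rfl).injective.moduleIsTorsionFree _ (map_smul _)

namespace LObj

abbrev ofFree {R : Type} [CommRing R] [IsDomain R] (π : R) (G : Type) [Group G] (m : ℕ)
    (τ : G → (Fin m → R) ≃ₗ[R] (Fin m → R)) (h1 : τ 1 = .refl R _)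
    (hlax : ∀ g h x, τ (g * h) x - τ g (τ h x) ∈ π • (⊤ : Submodule R (Fin m → R))) :
    LObj R π G where
  n := m
  rels := ⊥
  tors x hx := by
    rw [Submodule.isTorsionFree_iff_torsion_eq_bot.mp inferInstance] at hx
    rw [(Submodule.mem_bot R).mp hx, smul_zero]
  ρ g := Submodule.Quotient.equiv ⊥ ⊥ (τ g) (Submodule.map_bot _)
  map_one := by
    ext x
    induction x using Submodule.Quotient.induction_on
    simp [h1]
  lax g h := by
    refine ⟨fun x => ?_, fun x hx => ?_⟩
    · obtain ⟨z, rfl⟩ := Submodule.Quotient.mk_surjective _ x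
      obtain ⟨w, -, hw⟩ := (Submodule.mem_smul_pointwise_iff_exists _ _ _).mp (hlax g h z)
      refine ⟨Submodule.Quotient.mk w, ?_⟩
      simp [← Submodule.Quotient.mk_sub, ← Submodule.Quotient.mk_smul, hw]
    · rw [Submodule.isTorsionFree_iff_torsion_eq_bot.mp inferInstance] at hx
      rw [(Submodule.mem_bot R).mp hx, map_zero, map_zero]

end LObj

variable {R : Type} [CommRing R] {π : R} {G : Type} [Group G]

namespace LGroup

theorem mk_eq_add_of_shortExact {a b c : LObj R π G} (f : a.Mdl →ₗ[R] b.Mdl) (g : b.Mdl →ₗ[R] c.Mdl)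
    (hf : Function.Injective f) (hg : Function.Surjective g)
    (hfg : LinearMap.range f = LinearMap.ker g)
    (hf_equiv : ∀ g₀ : G, f ∘ₗ (a.ρ g₀ : a.Mdl →ₗ[R] a.Mdl) = (b.ρ g₀ : b.Mdl →ₗ[R] b.Mdl) ∘ₗ f)
    (hg_equiv : ∀ g₀ : G, g ∘ₗ (b.ρ g₀ : b.Mdl →ₗ[R] b.Mdl) = (c.ρ g₀ : c.Mdl →ₗ[R] c.Mdl) ∘ₗ g) :
    (QuotientAddGroup.mk (FreeAbelianGroup.of b) : LGroup R π G) =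
      QuotientAddGroup.mk (FreeAbelianGroup.of a) +
        QuotientAddGroup.mk (FreeAbelianGroup.of c) := by
  have hrel : FreeAbelianGroup.of b - FreeAbelianGroup.of a - FreeAbelianGroup.of c ∈ LRel R π G :=
    ⟨a, b, c, f, g, hf, hg, hfg, hf_equiv, hg_equiv, rfl⟩
  have h0 := (QuotientAddGroup.eq_zero_iff _).mpr (AddSubgroup.subset_closure hrel)
  rw [QuotientAddGroup.mk_sub, QuotientAddGroup.mk_sub, sub_sub, sub_eq_zero] at h0
  exact h0

theorem mk_eq_zero_of_quotient_smul_free [IsDomain R] (hπ : π ≠ 0) {o : LObj R π G}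
    (ho : ∀ g h : G, o.ρ (g * h) = (o.ρ h).trans (o.ρ g)) {m : ℕ}
    (φ : (Fin m → R) →ₗ[R] o.Mdl) (hφ : Function.Surjective φ) (hker : LinearMap.ker φ = π • ⊤)
    (τ : G → (Fin m → R) ≃ₗ[R] (Fin m → R)) (h1 : τ 1 = .refl R _)
    (hτ : ∀ g, φ ∘ₗ τ g = o.ρ g ∘ₗ φ) :
    (QuotientAddGroup.mk (FreeAbelianGroup.of o) : LGroup R π G) = 0 := by
  have hτ_apply (g : G) (x : Fin m → R) : φ (τ g x) = o.ρ g (φ x) := LinearMap.congr_fun (hτ g) x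
  have hlax (g h : G) (x : Fin m → R) :
      τ (g * h) x - τ g (τ h x) ∈ π • (⊤ : Submodule R (Fin m → R)) := by
    rw [← hker, LinearMap.mem_ker, map_sub, sub_eq_zero, hτ_apply, hτ_apply, hτ_apply, ho]
    rfl
  let p : (Fin m → R) ⧸ (⊥ : Submodule R (Fin m → R)) →ₗ[R] o.Mdl :=
    Submodule.liftQ ⊥ φ (bot_le (a := LinearMap.ker φ))
  have hp (z : Fin m → R) : p (Submodule.Quotient.mk z) = φ z := rfl
  have hexact : LinearMap.range (π • LinearMap.id) = LinearMap.ker p := by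
    ext x
    induction x using Submodule.Quotient.induction_on with | _ z
    rw [LinearMap.mem_ker, hp, ← LinearMap.mem_ker, hker, Submodule.mem_smul_pointwise_iff_exists]
    constructor
    · rintro ⟨y, hy⟩
      induction y using Submodule.Quotient.induction_on with | _ w
      refine ⟨w, Submodule.mem_top, ?_⟩
      simpa [← Submodule.Quotient.mk_smul, Submodule.Quotient.eq, sub_eq_zero] using hy
    · rintro ⟨w, -, rfl⟩
      exact ⟨Submodule.Quotient.mk w, by simp [Submodule.Quotient.mk_smul]⟩
  have hF := mk_eq_add_of_shortExact (a := LObj.ofFree π G m τ h1 hlax) (π • LinearMap.id) p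
    (fun x y hxy => smul_right_injective _ hπ (by simpa using hxy))
    (fun y => (hφ y).elim fun x hx => ⟨Submodule.Quotient.mk x, hx⟩) hexact
    (fun g => LinearMap.ext fun x => by simp)
    (fun g => LinearMap.ext fun x => by
      induction x using Submodule.Quotient.induction_on
      simp [p, hτ_apply])
  rwa [left_eq_add] at hF

end LGroup

/-- Let `R` be a commutative discrete valuation ring with uniformizer
`π` and residue field `k = R/(π)`, and `G` a group.  For every finite dimensional
`k`-vector space `X` regarded as an `R`-module (i.e. a finitely generated `R`-module
with `π·X = 0`) and every genuine group homomorphism `ρ : G → Aut_k(X)`, the class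
`[(X, ρ)]` vanishes in `L`. -/
theorem stmt9 (R : Type) [CommRing R] [IsDomain R] [IsDiscreteValuationRing R]
    (π : R) (hπ : Irreducible π) (G : Type) [Group G] :
    ∀ o : LObj R π G,
      (∀ x : o.Mdl, π • x = 0) →
      (∀ g h : G, o.ρ (g * h) = (o.ρ h).trans (o.ρ g)) →
      (QuotientAddGroup.mk (FreeAbelianGroup.of o) : LGroup R π G) = 0 := by
  intro o hπo ho
  have : Module.Finite R o.Mdl := .of_surjective o.rels.mkQ o.rels.mkQ_surjective
  have htors : Module.IsTorsionBySet R o.Mdl (maximalIdeal R) := by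
    rw [hπ.maximalIdeal_eq]
    exact (Module.isTorsionBySet_span_singleton_iff π).mpr hπo
  obtain ⟨m, φ, hφ, hker⟩ := exists_surjective_ker_eq_maximalIdeal_smul_top htors
  have hlift (g : G) : ∃ τ : (Fin m → R) ≃ₗ[R] (Fin m → R),
      (g = 1 → τ = .refl R _) ∧ φ ∘ₗ τ = o.ρ g ∘ₗ φ := by
    by_cases hg : g = 1
    · exact ⟨.refl R _, fun _ => rfl, by simp [hg, o.map_one]⟩
    · obtain ⟨τ, hτ⟩ := exists_linearEquiv_comp_eq_comp φ hφ hker.le (o.ρ g)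
      exact ⟨τ, fun h => (hg h).elim, hτ⟩
  choose τ hτ1 hτ using hlift
  rw [hπ.maximalIdeal_eq, Submodule.ideal_span_singleton_smul] at hker
  exact LGroup.mk_eq_zero_of_quotient_smul_free hπ.ne_zero ho φ hφ hker τ (hτ1 1 rfl) hτ
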